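/- Let d : ℕ → ℝ be a sequence and k ≥ 1 a natural number such that the increments of d are k-periodic, i.e. d (m+1+k) − d (m+k) = d (m+1) − d m for every m. Then for every natural number n, d n = d 0 + (↑(n / k)) · (d k − d 0) + ∑_{i=1}^{n % k} (d i − d (i−1)), where n / k is natural-number (floor) division and n % k is the remainder of n modulo k. -/

import Mathlib

/-!
Periodicity of the increments makes the `k`-step difference `d (m + k) - d m` independent of `m`
(induction on `m`), so each of the `n / k` full periods contributes `d k - d 0`. Writing
`n = n % k + (n / k) * k`, what remains is `d (n % k)`, which is `d 0` plus the telescoping sum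
of the first `n % k` increments.
-/

section PeriodicIncrements

variable {G : Type*} [AddCommGroup G]

theorem eq_add_sum_Icc_sub_pred (d : ℕ → G) (r : ℕ) :
    d r = d 0 + ∑ i ∈ Finset.Icc 1 r, (d i - d (i - 1)) := by
  induction r with
  | zero => simp
  | succ r ih =>
    rw [Finset.sum_Icc_succ_top (Nat.le_add_left 1 r), Nat.add_sub_cancel, ← add_assoc, ← ih,
      add_sub_cancel]

variable {d : ℕ → G} {k : ℕ}

theorem add_period_sub_eq_of_periodic_increments
    (hper : ∀ m, d (m + 1 + k) - d (m + k) = d (m + 1) - d m) (m : ℕ) :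
    d (m + k) - d m = d k - d 0 := by
  induction m with
  | zero => simp
  | succ m ih =>
    rw [← ih, ← sub_add_sub_cancel (d (m + 1 + k)) (d (m + k)), hper m]
    abel

theorem add_mul_period_eq_of_periodic_increments
    (hper : ∀ m, d (m + 1 + k) - d (m + k) = d (m + 1) - d m) (q m : ℕ) :
    d (m + q * k) = d m + q • (d k - d 0) := by
  induction q with
  | zero => simp
  | succ q ih =>
    rw [Nat.succ_mul, ← add_assoc, ← sub_add_cancel (d (m + q * k + k)) (d (m + q * k)),
      add_period_sub_eq_of_periodic_increments hper, ih, succ_nsmul]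
    abel

end PeriodicIncrements

theorem accelerated_zone_periodic_general (d : ℕ → ℝ) (k : ℕ)
    (hper : ∀ m : ℕ, d (m + 1 + k) - d (m + k) = d (m + 1) - d m) :
    ∀ n : ℕ, d n = d 0 + ((n / k : ℕ) : ℝ) * (d k - d 0) +
      ∑ i ∈ Finset.Icc 1 (n % k), (d i - d (i - 1)) := by
  intro n
  calc d n = d (n % k + n / k * k) := by rw [Nat.mod_add_div']
    _ = d (n % k) + ((n / k : ℕ) : ℝ) * (d k - d 0) := by
      rw [add_mul_period_eq_of_periodic_increments hper, nsmul_eq_mul]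
    _ = _ := by rw [eq_add_sum_Icc_sub_pred d (n % k)]; ring

/-- Accelerated-zone formula for a cycle with periodic delays: if the increments
of a DBM entry are `k`-periodic, then
`d n = d 0 + ⌊n/k⌋·(d k − d 0) + ∑_{i=1}^{n % k} (d i − d (i−1))`. -/
theorem accelerated_zone_periodic (d : ℕ → ℝ) (k : ℕ) (hk : 1 ≤ k)
    (hper : ∀ m : ℕ, d (m + 1 + k) - d (m + k) = d (m + 1) - d m) :
    ∀ n : ℕ, d n = d 0 + ((n / k : ℕ) : ℝ) * (d k - d 0) +
      ∑ i ∈ Finset.Icc 1 (n % k), (d i - d (i - 1)) :=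
  accelerated_zone_periodic_general d k hper
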